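/- arXiv:2404.16722 — 4 statements merged into one kernel-verified Lean document; each statement's English description precedes it below -/
import Mathlib

section
/- Let k, b, c be natural numbers with b ≤ c ≤ k. The number of graphs H on the labeled vertex set [k] that have a vertex cover of size at most b and satisfy |V(E(H))| ≤ c is at most 2^{c·log₂ k + b·(c − (b+1)/2)}, and in particular at most 2^{c·(b + log₂ k)}. -/
open Finset
open scoped Classical

namespace CliqueSA

variable {k : ℕ}

/-- `C` is a vertex cover of the graph `H` on `[k]`. -/
def IsVC (H : SimpleGraph (Fin k)) (C : Finset (Fin k)) : Prop :=
  ∀ ⦃u v : Fin k⦄, H.Adj u v → u ∈ C ∨ v ∈ C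

/-- Minimum vertex cover size of a graph on `[k]`. -/
noncomputable def vc (H : SimpleGraph (Fin k)) : ℕ :=
  sInf {m | ∃ C : Finset (Fin k), IsVC H C ∧ C.card = m}

/-- The edges of a graph on `[k]` as a `Finset`. -/
noncomputable def edgeF (H : SimpleGraph (Fin k)) : Finset (Sym2 (Fin k)) :=
  Finset.univ.filter (fun e => e ∈ H.edgeSet)

/-- Restriction of `H` to the vertex subset `B` (vertex-induced subgraph, on the vertex set `[k]`). -/
def restrict (H : SimpleGraph (Fin k)) (B : Finset (Fin k)) : SimpleGraph (Fin k) where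
  Adj u v := H.Adj u v ∧ u ∈ B ∧ v ∈ B
  symm := ⟨by intro u v h; exact ⟨h.1.symm, h.2.2, h.2.1⟩⟩
  loopless := ⟨by intro u h; exact H.loopless.irrefl u h.1⟩

/-- The non-isolated vertices `V(E(H))` of a graph on `[k]`. -/
noncomputable def suppF (H : SimpleGraph (Fin k)) : Finset (Fin k) :=
  Finset.univ.filter (fun v => v ∈ H.support)

/-- `W` is a minimum vertex cover of `H`. -/
def IsMinVC (H : SimpleGraph (Fin k)) (W : Finset (Fin k)) : Prop :=
  IsVC H W ∧ W.card = vc H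

/-- There is a matching in `H` from `U` into `W` covering all of `U`. -/
def MatchableInto (H : SimpleGraph (Fin k)) (U W : Finset (Fin k)) : Prop :=
  ∃ f : Fin k → Fin k, Set.InjOn f ↑U ∧ ∀ u ∈ U, f u ∈ W ∧ H.Adj u (f u)

/-- `U ⊆ Avail` is maximal (w.r.t. inclusion) with a matching in `H` from `U` into `W`
covering `U`. -/
def MaximalMatched (H : SimpleGraph (Fin k)) (W Avail U : Finset (Fin k)) : Prop :=
  U ⊆ Avail ∧ MatchableInto H U W ∧
    ∀ U', U ⊂ U' → U' ⊆ Avail → ¬ MatchableInto H U' W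

/-- `F` is a core of `H`: a vertex-induced subgraph such that every minimum vertex cover of `F`
is a vertex cover of `H`. -/
def IsCore (F H : SimpleGraph (Fin k)) : Prop :=
  (∃ S : Finset (Fin k), F = restrict H S) ∧
    ∀ C : Finset (Fin k), IsVC F C → C.card = vc F → IsVC H C

/-- `H` is in the `(i,e)`-boundary: `vc(H) = i` and `vc(H ∪ {e}) = i + 1`. -/
def InBoundary (i : ℕ) (H : SimpleGraph (Fin k)) (e : Sym2 (Fin k)) : Prop :=
  vc H = i ∧ vc (H ⊔ SimpleGraph.fromEdgeSet {e}) = i + 1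

end CliqueSA

/-!
Enumerate the support `V(E(H))`, which has at most `c` vertices, listing a vertex cover of size
at most `b` first. Every edge of `H` then joins two positions `i < j < c` with `i < b`, so `H` is
determined by the enumeration (at most `k ^ c` choices) together with a set of such position
pairs, of which there are `b * c - b * (b + 1) / 2`.
-/

namespace CliqueSA

variable {V : Type*} {k : ℕ}

def patternPairs (b c : ℕ) : Finset (ℕ × ℕ) :=
  (range b ×ˢ range c).filter fun p => p.1 < p.2

theorem two_mul_card_patternPairs {b c : ℕ} (hbc : b ≤ c) :
    2 * #(patternPairs b c) + b * (b + 1) = 2 * b * c := by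
  induction b with
  | zero => simp [patternPairs]
  | succ b ih =>
    have hsucc : patternPairs (b + 1) c = patternPairs b c ∪ {b} ×ˢ Ioo b c := by
      ext ⟨i, j⟩
      simp only [patternPairs, mem_union, mem_filter, mem_product, mem_range, mem_singleton,
        mem_Ioo]
      omega
    have hdisj : Disjoint (patternPairs b c) ({b} ×ˢ Ioo b c) := by
      simp only [disjoint_left, patternPairs, mem_filter, mem_product, mem_range, mem_singleton]
      omega
    rw [hsucc, card_union_of_disjoint hdisj, card_product, card_singleton, Nat.card_Ioo]
    obtain ⟨t, rfl⟩ := Nat.exists_eq_add_of_lt hbc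
    have := ih (by omega)
    rw [show b + t + 1 - b - 1 = t by omega]
    linarith

theorem cast_card_patternPairs {b c : ℕ} (hbc : b ≤ c) :
    (#(patternPairs b c) : ℝ) = b * (c - (b + 1) / 2) := by
  have h : (2 * #(patternPairs b c) + b * (b + 1) : ℝ) = 2 * b * c := by
    exact_mod_cast two_mul_card_patternPairs hbc
  linarith

def patternGraph {c : ℕ} (ψ : Fin c → V) (E : Finset (ℕ × ℕ)) : SimpleGraph V :=
  SimpleGraph.fromEdgeSet {e | ∃ i j : Fin c, ((i : ℕ), (j : ℕ)) ∈ E ∧ s(ψ i, ψ j) = e}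

theorem exists_indexing_cover_first (d : V) {b c : ℕ} {C S : Finset V} (hCS : C ⊆ S)
    (hCb : #C ≤ b) (hSc : #S ≤ c) :
    ∃ (ψ : ℕ → V) (ι : V → ℕ),
      (∀ u ∈ S, ι u < c ∧ ψ (ι u) = u) ∧ ∀ u ∈ C, ι u < b := by
  set L := C.toList ++ (S \ C).toList
  have hlen : L.length = #S := by
    rw [List.length_append, length_toList, length_toList, add_comm, card_sdiff_add_card_eq_card hCS]
  refine ⟨fun i => L.getD i d, fun u => L.idxOf u, fun u hu => ?_, fun u hu => ?_⟩ <;>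
    dsimp only
  · have hlt : L.idxOf u < L.length := List.idxOf_lt_length_iff.2 (by
      by_cases h : u ∈ C <;> simp [L, h, hu])
    exact ⟨by omega, by rw [List.getD_eq_getElem _ _ hlt, List.getElem_idxOf]⟩
  · have hu' : u ∈ C.toList := mem_toList.2 hu
    rw [List.idxOf_append_of_mem hu']
    exact (List.idxOf_lt_length_iff.2 hu').trans_le (by simpa using hCb)

theorem exists_eq_patternGraph (d : V) {b c : ℕ} (H : SimpleGraph V) {C S : Finset V}
    (hC : ∀ ⦃u v⦄, H.Adj u v → u ∈ C ∨ v ∈ C)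
    (hS : ∀ ⦃u v⦄, H.Adj u v → u ∈ S)
    (hCS : C ⊆ S) (hCb : #C ≤ b) (hSc : #S ≤ c) :
    ∃ ψ : Fin c → V, ∃ E ⊆ patternPairs b c, H = patternGraph ψ E := by
  obtain ⟨ψ, ι, hιS, hιC⟩ := exists_indexing_cover_first d hCS hCb hSc
  set E := (patternPairs b c).filter fun p => H.Adj (ψ p.1) (ψ p.2)
  refine ⟨fun i => ψ i, E, filter_subset _ _, ?_⟩
  have hordered : ∀ ⦃u v⦄, H.Adj u v → ι u < ι v →
      ∃ i j : Fin c, ((i : ℕ), (j : ℕ)) ∈ E ∧ s(ψ i, ψ j) = s(u, v) := by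
    intro u v huv hlt
    obtain ⟨hu, hψu⟩ := hιS u (hS huv)
    obtain ⟨hv, hψv⟩ := hιS v (hS huv.symm)
    have hub : ι u < b := by
      rcases hC huv with h | h
      exacts [hιC u h, hlt.trans (hιC v h)]
    refine ⟨⟨ι u, hu⟩, ⟨ι v, hv⟩, ?_, by simp [hψu, hψv]⟩
    simp [E, patternPairs, hub, hv, hlt, hψu, hψv, huv]
  ext u v
  simp only [patternGraph, SimpleGraph.fromEdgeSet_adj, Set.mem_ofPred_eq]
  constructor
  · intro huv
    refine ⟨?_, huv.ne⟩
    have hne : ι u ≠ ι v := fun h => huv.ne (by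
      rw [← (hιS u (hS huv)).2, h, (hιS v (hS huv.symm)).2])
    rcases hne.lt_or_gt with hlt | hlt
    · exact hordered huv hlt
    · simpa only [Sym2.eq_swap] using hordered huv.symm hlt
  · rintro ⟨⟨i, j, hij, he⟩, -⟩
    have hadj := (mem_filter.1 hij).2
    rcases Sym2.eq_iff.1 he with ⟨rfl, rfl⟩ | ⟨rfl, rfl⟩
    exacts [hadj, hadj.symm]

theorem mem_suppF_of_adj {H : SimpleGraph (Fin k)} {u v : Fin k} (huv : H.Adj u v) :
    u ∈ suppF H := by
  simpa [suppF] using ⟨v, huv⟩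

theorem exists_isVC_subset_suppF (H : SimpleGraph (Fin k)) :
    ∃ C, IsVC H C ∧ C ⊆ suppF H ∧ #C ≤ vc H := by
  obtain ⟨C, hC, hcard⟩ : vc H ∈ {m | ∃ C : Finset (Fin k), IsVC H C ∧ #C = m} :=
    Nat.sInf_mem ⟨_, univ, fun u _ _ => .inl (mem_univ u), rfl⟩
  refine ⟨C ∩ suppF H, fun u v huv => ?_, inter_subset_right,
    hcard ▸ card_le_card inter_subset_left⟩
  rcases hC huv with h | h
  exacts [.inl (mem_inter.2 ⟨h, mem_suppF_of_adj huv⟩),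
    .inr (mem_inter.2 ⟨h, mem_suppF_of_adj huv.symm⟩)]

theorem card_graphs_le_pow_mul_two_pow (hk : 0 < k) (b c : ℕ) :
    #(univ.filter fun H : SimpleGraph (Fin k) => vc H ≤ b ∧ #(suppF H) ≤ c) ≤
      k ^ c * 2 ^ #(patternPairs b c) := by
  calc _ ≤ #(((univ : Finset (Fin c → Fin k)) ×ˢ (patternPairs b c).powerset).image
          fun x => patternGraph x.1 x.2) := by
        refine card_le_card fun H hH => ?_
        obtain ⟨hvc, hsupp⟩ := (mem_filter.1 hH).2
        obtain ⟨C, hC, hCS, hCvc⟩ := exists_isVC_subset_suppF H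
        obtain ⟨ψ, E, hE, rfl⟩ := exists_eq_patternGraph ⟨0, hk⟩ H hC
          (fun _ _ => mem_suppF_of_adj) hCS (hCvc.trans hvc) hsupp
        exact mem_image.2 ⟨(ψ, E), by simpa using hE, rfl⟩
    _ ≤ _ := card_image_le
    _ = k ^ c * 2 ^ #(patternPairs b c) := by simp

theorem card_graphs_le_two_rpow (b c : ℕ) :
    (#(univ.filter fun H : SimpleGraph (Fin k) => vc H ≤ b ∧ #(suppF H) ≤ c) : ℝ) ≤
      2 ^ (c * Real.logb 2 k + #(patternPairs b c)) := by
  rcases k.eq_zero_or_pos with rfl | hk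
  · rw [Nat.cast_zero, Real.logb_zero, mul_zero, zero_add]
    exact le_trans (by exact_mod_cast card_le_one_of_subsingleton _)
      (Real.one_le_rpow one_le_two (Nat.cast_nonneg _))
  · rw [Real.rpow_add two_pos, mul_comm (c : ℝ), Real.rpow_mul zero_le_two,
      Real.rpow_logb two_pos one_lt_two.ne' (by exact_mod_cast hk), Real.rpow_natCast,
      Real.rpow_natCast]
    exact_mod_cast card_graphs_le_pow_mul_two_pow hk b c

theorem count_pattern_graphs_general (k b c : ℕ) (hbc : b ≤ c) :
    ((Finset.univ.filter (fun H : SimpleGraph (Fin k) =>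
        vc H ≤ b ∧ (suppF H).card ≤ c)).card : ℝ) ≤
      (2 : ℝ) ^ ((c : ℝ) * Real.logb 2 k + (b : ℝ) * ((c : ℝ) - ((b : ℝ) + 1) / 2)) ∧
    ((Finset.univ.filter (fun H : SimpleGraph (Fin k) =>
        vc H ≤ b ∧ (suppF H).card ≤ c)).card : ℝ) ≤
      (2 : ℝ) ^ ((c : ℝ) * ((b : ℝ) + Real.logb 2 k)) := by
  have hfirst := cast_card_patternPairs hbc ▸ card_graphs_le_two_rpow (k := k) b c
  refine ⟨hfirst, hfirst.trans (Real.rpow_le_rpow_of_exponent_le one_le_two ?_)⟩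
  have hb : (0 : ℝ) ≤ b := b.cast_nonneg
  nlinarith

/-- Lemma `lem:count-H`: there are at most
`2^{c log₂ k + b(c - (b+1)/2)} ≤ 2^{c(b + log₂ k)}` graphs `H` on `[k]` with a vertex cover of
size at most `b` and at most `c` non-isolated vertices. -/
theorem count_pattern_graphs (k b c : ℕ) (hbc : b ≤ c) (hck : c ≤ k) :
    ((Finset.univ.filter (fun H : SimpleGraph (Fin k) =>
        vc H ≤ b ∧ (suppF H).card ≤ c)).card : ℝ) ≤
      (2 : ℝ) ^ ((c : ℝ) * Real.logb 2 k + (b : ℝ) * ((c : ℝ) - ((b : ℝ) + 1) / 2)) ∧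
    ((Finset.univ.filter (fun H : SimpleGraph (Fin k) =>
        vc H ≤ b ∧ (suppF H).card ≤ c)).card : ℝ) ≤
      (2 : ℝ) ^ ((c : ℝ) * ((b : ℝ) + Real.logb 2 k)) :=
  count_pattern_graphs_general k b c hbc

end CliqueSA
end

section
/- For every k there is a map core from graphs on vertex set [k] to graphs on vertex set [k] with the following properties: (i) for every graph H, core(H) is a core of H; (ii) for every graph F in the image of core, |V(E(F))| ≤ 3·vc(F); and (iii) for every F in the image of core there exists an edge set E*_F ⊆ V(E(F)) × ([k] ∖ V(E(F))) such that for every graph H, core(H) = F if and only if E(H) = E(F) ∪ E for some E ⊆ E*_F. -/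
open Finset
open scoped Classical

/-!
Take a minimum vertex cover `W` of `H`, chosen canonically from the family of all minimum
covers. Scanning the remaining vertices in a fixed order, greedily collect a maximal set `U₁`
that can be matched into `W`, and then such a set `U₂` among the vertices left over; the core is
`H` induced on `W ∪ U₁ ∪ U₂`, which has at most `3 |W|` vertices. If an edge `uv` of `H` leaves
the core, then `u ∈ W`, and by Hall's theorem the `W`-neighbourhood of `v` lies in the
neighbourhoods of tight sets `S₁ ⊆ U₁` and `S₂ ⊆ U₂`; exchanging first `S₁` and then `S₂` for
their neighbourhoods in a minimum cover of the core that missed `u` would make it smaller.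
Conversely, adding to `F = core H` edges that occur in other graphs with core `F` changes neither
the minimum vertex covers nor any greedy decision: an added edge at a vertex outside `V(E(F))`
was blocked by a tight set in the graph it came from, and tight sets are closed under union.
-/

namespace CliqueSA

section Hall

variable {V : Type*} {N N' : V → Finset V} {U S T : Finset V} {v : V}

def Matchable (N : V → Finset V) (U : Finset V) : Prop :=
  ∃ f : V → V, Set.InjOn f U ∧ ∀ u ∈ U, f u ∈ N u

theorem Matchable.mono (h : Matchable N U) (hTU : T ⊆ U) : Matchable N T :=
  let ⟨f, hinj, hf⟩ := h
  ⟨f, hinj.mono (coe_subset.2 hTU), fun u hu => hf u (hTU hu)⟩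

theorem Matchable.congr (h : Matchable N U) (hN : ∀ u ∈ U, N u = N' u) : Matchable N' U :=
  let ⟨f, hinj, hf⟩ := h
  ⟨f, hinj, fun u hu => hN u hu ▸ hf u hu⟩

variable [DecidableEq V]

def IsTight (N : V → Finset V) (S : Finset V) : Prop :=
  #(S.biUnion N) = #S

theorem matchable_iff_hall : Matchable N U ↔ ∀ S ⊆ U, #S ≤ #(S.biUnion N) := by
  constructor
  · rintro ⟨f, hinj, hf⟩ S hSU
    calc #S = #(S.image f) := (card_image_of_injOn (hinj.mono (coe_subset.2 hSU))).symm
      _ ≤ #(S.biUnion N) := card_le_card (image_subset_iff.2 fun s hs =>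
          mem_biUnion.2 ⟨s, hs, hf s (hSU hs)⟩)
  · intro hall
    obtain ⟨g, hinj, hg⟩ := (all_card_le_biUnion_card_iff_exists_injective
      fun u : U => N u).1 fun s => by
        simpa [card_image_of_injective s Subtype.val_injective, image_biUnion] using
          hall (s.image Subtype.val) (image_subset_iff.2 fun u _ => u.2)
    refine ⟨fun x => if hx : x ∈ U then g ⟨x, hx⟩ else x, fun a ha b hb hab => ?_,
      fun u hu => by simpa [hu] using hg ⟨u, hu⟩⟩
    simp only [mem_coe] at ha hb
    exact congrArg Subtype.val (hinj (by simpa [ha, hb] using hab))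

theorem exists_isTight_of_not_matchable_insert (hU : Matchable N U)
    (h : ¬ Matchable N (insert v U)) : ∃ S ⊆ U, IsTight N S ∧ N v ⊆ S.biUnion N := by
  have hallU := matchable_iff_hall.1 hU
  obtain ⟨A, hAU, hA⟩ : ∃ A ⊆ insert v U, #(A.biUnion N) < #A := by
    simpa [matchable_iff_hall] using h
  have hAU' : A.erase v ⊆ U := fun x hx =>
    (mem_insert.1 (hAU (mem_of_mem_erase hx))).resolve_left (ne_of_mem_erase hx)
  have hvA : v ∈ A := by
    by_contra hvA
    exact (hallU A (erase_eq_of_notMem hvA ▸ hAU')).not_gt hA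
  -- Hall's condition for `A.erase v` and its failure for `A` force equal neighbourhoods.
  have hle := hallU _ hAU'
  have hcard := card_erase_add_one hvA
  have heq : (A.erase v).biUnion N = A.biUnion N :=
    eq_of_subset_of_card_le (biUnion_subset_biUnion_of_subset_left _ (erase_subset v A)) (by omega)
  refine ⟨A.erase v, hAU', le_antisymm (by rw [heq]; omega) hle, ?_⟩
  rw [heq]
  exact subset_biUnion_of_mem N hvA

theorem IsTight.union (hU : Matchable N U) (hSU : S ⊆ U) (hTU : T ⊆ U) (hS : IsTight N S)
    (hT : IsTight N T) : IsTight N (S ∪ T) := by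
  have hinter : (S ∩ T).biUnion N ⊆ S.biUnion N ∩ T.biUnion N :=
    subset_inter (biUnion_subset_biUnion_of_subset_left _ inter_subset_left)
      (biUnion_subset_biUnion_of_subset_left _ inter_subset_right)
  have hall := matchable_iff_hall.1 hU
  have h₁ := hall (S ∩ T) (inter_subset_left.trans hSU)
  have h₂ := hall (S ∪ T) (union_subset hSU hTU)
  have h₃ := card_le_card hinter
  have h₄ := card_union_add_card_inter (S.biUnion N) (T.biUnion N)
  have h₅ := card_union_add_card_inter S T
  unfold IsTight at *
  rw [union_biUnion] at h₂ ⊢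
  omega

theorem exists_isTight_superset (hU : Matchable N U) (A : Finset V)
    (h : ∀ a ∈ A, ∃ S ⊆ U, IsTight N S ∧ a ∈ S.biUnion N) :
    ∃ S ⊆ U, IsTight N S ∧ A ⊆ S.biUnion N := by
  induction A using Finset.induction with
  | empty => exact ⟨∅, empty_subset _, rfl, empty_subset _⟩
  | insert a A _ ih =>
    obtain ⟨S, hSU, hS, hAS⟩ := ih fun x hx => h x (mem_insert_of_mem hx)
    obtain ⟨T, hTU, hT, haT⟩ := h a (mem_insert_self a A)
    refine ⟨S ∪ T, union_subset hSU hTU, hS.union hU hSU hTU hT, ?_⟩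
    rw [union_biUnion]
    exact insert_subset (mem_union_right _ haT) (hAS.trans subset_union_left)

/-- The obstructing tight sets unite to one tight set. -/
theorem not_matchable_insert_of_forall (hU : Matchable N U) (hvU : v ∉ U)
    (hN' : ∀ u ∈ U, N' u = N u)
    (h : ∀ w ∈ N' v, ∃ M : V → Finset V, (∀ u ∈ U, M u = N u) ∧ w ∈ M v ∧
      ¬ Matchable M (insert v U)) :
    ¬ Matchable N' (insert v U) := by
  obtain ⟨S, hSU, hS, hvS⟩ := exists_isTight_superset hU (N' v) fun w hw => by
    obtain ⟨M, hMU, hwM, hM⟩ := h w hw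
    obtain ⟨S, hSU, hS, hvS⟩ :=
      exists_isTight_of_not_matchable_insert (hU.congr fun u hu => (hMU u hu).symm) hM
    have hSN : S.biUnion M = S.biUnion N := biUnion_congr rfl fun u hu => hMU u (hSU hu)
    exact ⟨S, hSU, (congrArg card hSN).symm.trans hS, hSN ▸ hvS hwM⟩
  intro hmatch
  have hall := matchable_iff_hall.1 hmatch (insert v S) (insert_subset_insert v hSU)
  have hSN' : S.biUnion N' = S.biUnion N := biUnion_congr rfl fun u hu => hN' u (hSU hu)
  rw [biUnion_insert, hSN', union_eq_right.2 hvS,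
    card_insert_of_notMem fun hv => hvU (hSU hv)] at hall
  unfold IsTight at hS
  omega

theorem IsTight.image_eq {f : V → V} (hS : IsTight N S) (hinj : Set.InjOn f S)
    (hf : ∀ s ∈ S, f s ∈ N s) : S.image f = S.biUnion N :=
  eq_of_subset_of_card_le (image_subset_iff.2 fun s hs => mem_biUnion.2 ⟨s, hs, hf s hs⟩)
    (by rw [card_image_of_injOn hinj, hS])

end Hall

variable {k : ℕ}

section VertexCover

variable {G H : SimpleGraph (Fin k)} {C S T : Finset (Fin k)}

theorem IsVC.vc_le_card (hC : IsVC H C) : vc H ≤ #C :=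
  Nat.sInf_le ⟨C, hC, rfl⟩

theorem IsVC.mono (hC : IsVC H C) (hGH : G ≤ H) : IsVC G C :=
  fun _ _ h => hC (hGH h)

theorem exists_isMinVC (H : SimpleGraph (Fin k)) : ∃ C, IsMinVC H C :=
  Nat.sInf_mem (s := {m | ∃ C : Finset (Fin k), IsVC H C ∧ #C = m})
    ⟨_, univ, fun u _ _ => Or.inl (mem_univ u), rfl⟩

theorem IsMinVC.subset_suppF (hC : IsMinVC H C) : C ⊆ suppF H := by
  intro x hx
  by_contra hxH
  have hcover : IsVC H (C.erase x) := fun u v huv => by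
    have hux : u ≠ x := by rintro rfl; exact hxH (by simpa [suppF] using ⟨v, huv⟩)
    have hvx : v ≠ x := by rintro rfl; exact hxH (by simpa [suppF] using ⟨u, huv.symm⟩)
    simpa [hux, hvx] using hC.1 huv
  have h₁ := hcover.vc_le_card
  rw [card_erase_of_mem hx] at h₁
  have h₂ := card_pos.2 ⟨x, hx⟩
  have h₃ := hC.2
  omega

theorem IsVC.sdiff_union (hC : IsVC G C) (hT : ∀ s ∈ S, ∀ y, G.Adj s y → y ∈ T) :
    IsVC G (C \ S ∪ T) := by
  have key : ∀ x y, G.Adj x y → x ∈ C → x ∈ C \ S ∪ T ∨ y ∈ C \ S ∪ T :=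
    fun x y hxy hx => by
      by_cases hxS : x ∈ S
      · exact Or.inr (mem_union_right _ (hT x hxS y hxy))
      · exact Or.inl (mem_union_left _ (mem_sdiff.2 ⟨hx, hxS⟩))
  intro x y hxy
  exact (hC hxy).elim (key x y hxy) fun hy => (key y x hxy.symm hy).symm

theorem IsVC.card_sdiff_union_add_le {f : Fin k → Fin k} (hC : IsVC G C) (hST : Disjoint S T)
    (hTf : T ⊆ S.image f) (hadj : ∀ s ∈ S, G.Adj s (f s)) :
    #(C \ S ∪ T) + #{s ∈ S ∩ C | f s ∈ C} ≤ #C := by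
  have h₁ : C \ S ∪ T ⊆ C \ S ∪ (T \ C) := fun t ht => by
    have htS : t ∈ T → t ∉ S := fun htT => disjoint_right.1 hST htT
    simp only [mem_union, mem_sdiff] at ht ⊢
    tauto
  have h₂ : T \ C ⊆ {s ∈ S ∩ C | f s ∉ C}.image f := fun t ht => by
    obtain ⟨htT, htC⟩ := mem_sdiff.1 ht
    obtain ⟨s, hs, rfl⟩ := mem_image.1 (hTf htT)
    have hsC : s ∈ C := (hC (hadj s hs)).resolve_right htC
    exact mem_image_of_mem f (by simp [hs, hsC, htC])
  have h₃ := card_filter_add_card_filter_not (s := S ∩ C) (fun s => f s ∈ C)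
  have h₄ := card_inter_add_card_sdiff C S
  rw [inter_comm] at h₄
  have := card_le_card h₁
  have := card_union_le (C \ S) (T \ C)
  have := (card_le_card h₂).trans card_image_le
  omega

end VertexCover

section Matching

variable {H : SimpleGraph (Fin k)} {U W : Finset (Fin k)}

noncomputable def nbrIn (H : SimpleGraph (Fin k)) (W : Finset (Fin k)) (v : Fin k) :
    Finset (Fin k) :=
  W.filter (H.Adj v)

theorem matchableInto_iff_matchable : MatchableInto H U W ↔ Matchable (nbrIn H W) U := by
  simp only [MatchableInto, Matchable, nbrIn, mem_filter]

theorem MatchableInto.mono {U' : Finset (Fin k)} (h : MatchableInto H U W) (hU' : U' ⊆ U) :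
    MatchableInto H U' W :=
  matchableInto_iff_matchable.2 ((matchableInto_iff_matchable.1 h).mono hU')

theorem MatchableInto.card_le (h : MatchableInto H U W) : #U ≤ #W :=
  let ⟨f, hinj, hf⟩ := h
  card_le_card_of_injOn f (fun u hu => (hf u hu).1) hinj

theorem MatchableInto.subset_suppF (h : MatchableInto H U W) : U ⊆ suppF H :=
  let ⟨f, _, hf⟩ := h
  fun u hu => by simpa [suppF] using ⟨f u, (hf u hu).2⟩

end Matching

section Greedy

variable (P : Finset (Fin k) → Prop)

noncomputable def greedyPrefix : ℕ → Finset (Fin k)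
  | 0 => ∅
  | n + 1 =>
    if hn : n < k then
      if P (insert ⟨n, hn⟩ (greedyPrefix n)) then insert ⟨n, hn⟩ (greedyPrefix n)
      else greedyPrefix n
    else greedyPrefix n

noncomputable def greedy : Finset (Fin k) := greedyPrefix P k

variable {P} {n : ℕ} {v : Fin k}

theorem greedyPrefix_succ (hn : n < k) :
    greedyPrefix P (n + 1) =
      if P (insert ⟨n, hn⟩ (greedyPrefix P n)) then insert ⟨n, hn⟩ (greedyPrefix P n)
      else greedyPrefix P n := by
  rw [greedyPrefix, dif_pos hn]

theorem greedyPrefix_succ_of_le (hn : k ≤ n) : greedyPrefix P (n + 1) = greedyPrefix P n := by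
  rw [greedyPrefix, dif_neg (not_lt.2 hn)]

theorem greedyPrefix_mono : Monotone (greedyPrefix P) := by
  refine monotone_nat_of_le_succ fun n => ?_
  rcases lt_or_ge n k with hn | hn
  · rw [greedyPrefix_succ hn]
    split_ifs
    exacts [subset_insert _ _, subset_rfl]
  · rw [greedyPrefix_succ_of_le hn]

theorem greedyPrefix_spec (h₀ : P ∅) : ∀ n, P (greedyPrefix P n)
  | 0 => h₀
  | n + 1 => by
    rcases lt_or_ge n k with hn | hn
    · rw [greedyPrefix_succ hn]
      split_ifs with h
      exacts [h, greedyPrefix_spec h₀ n]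
    · rw [greedyPrefix_succ_of_le hn]
      exact greedyPrefix_spec h₀ n

theorem not_insert_greedyPrefix_of_not_mem_greedy (hv : v ∉ greedy P) :
    ¬ P (insert v (greedyPrefix P v)) := by
  intro h
  apply hv
  have hstep : v ∈ greedyPrefix P (v + 1) := by
    rw [greedyPrefix_succ v.2, if_pos h]
    exact mem_insert_self _ _
  exact greedyPrefix_mono (Nat.succ_le_of_lt v.2) hstep

theorem not_insert_greedy_of_not_mem_greedy (hP : ∀ ⦃A B⦄, A ⊆ B → P B → P A)
    (hv : v ∉ greedy P) : ¬ P (insert v (greedy P)) :=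
  fun h => not_insert_greedyPrefix_of_not_mem_greedy hv
    (hP (insert_subset_insert v (greedyPrefix_mono v.2.le)) h)

theorem greedyPrefix_succ_congr {Q : Finset (Fin k) → Prop}
    (h : greedyPrefix P n = greedyPrefix Q n)
    (hPQ : ∀ hn : n < k,
      P (insert ⟨n, hn⟩ (greedyPrefix P n)) ↔ Q (insert ⟨n, hn⟩ (greedyPrefix P n))) :
    greedyPrefix P (n + 1) = greedyPrefix Q (n + 1) := by
  rcases lt_or_ge n k with hn | hn
  · rw [greedyPrefix_succ hn, greedyPrefix_succ hn, ← h, propext (hPQ hn)]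
  · rw [greedyPrefix_succ_of_le hn, greedyPrefix_succ_of_le hn, h]

end Greedy

section CoreMap

variable {H : SimpleGraph (Fin k)} {C S W Av : Finset (Fin k)} {u v : Fin k}

/-- Chosen as a function of the predicate `IsMinVC H` alone, so that graphs with the same minimum
vertex covers get the same one. -/
noncomputable def minVC (H : SimpleGraph (Fin k)) : Finset (Fin k) :=
  Classical.epsilon (IsMinVC H)

theorem isMinVC_minVC (H : SimpleGraph (Fin k)) : IsMinVC H (minVC H) :=
  Classical.epsilon_spec (exists_isMinVC H)

def MatchableWithin (H : SimpleGraph (Fin k)) (W Av U : Finset (Fin k)) : Prop :=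
  U ⊆ Av ∧ MatchableInto H U W

theorem matchableWithin_empty : MatchableWithin H W Av ∅ :=
  ⟨empty_subset _, id, by simp, by simp⟩

theorem matchableWithin_greedy : MatchableWithin H W Av (greedy (MatchableWithin H W Av)) :=
  greedyPrefix_spec matchableWithin_empty k

theorem exists_isTight_of_not_mem_greedy (hv : v ∈ Av)
    (hv' : v ∉ greedy (MatchableWithin H W Av)) :
    ∃ S ⊆ greedy (MatchableWithin H W Av),
      IsTight (nbrIn H W) S ∧ nbrIn H W v ⊆ S.biUnion (nbrIn H W) := by
  have hU := matchableWithin_greedy (H := H) (W := W) (Av := Av)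
  have hrej := not_insert_greedy_of_not_mem_greedy
    (fun _ _ hAB hB => ⟨hAB.trans hB.1, hB.2.mono hAB⟩) hv'
  exact exists_isTight_of_not_matchable_insert (matchableInto_iff_matchable.1 hU.2) fun h =>
    hrej ⟨insert_subset hv hU.1, matchableInto_iff_matchable.2 h⟩

noncomputable def layer₁ (H : SimpleGraph (Fin k)) : Finset (Fin k) :=
  greedy (MatchableWithin H (minVC H) (minVC H)ᶜ)

noncomputable def layer₂ (H : SimpleGraph (Fin k)) : Finset (Fin k) :=
  greedy (MatchableWithin H (minVC H) (minVC H ∪ layer₁ H)ᶜ)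

noncomputable def coreVerts (H : SimpleGraph (Fin k)) : Finset (Fin k) :=
  minVC H ∪ layer₁ H ∪ layer₂ H

noncomputable def coreMap (H : SimpleGraph (Fin k)) : SimpleGraph (Fin k) :=
  restrict H (coreVerts H)

theorem coreMap_adj {a b : Fin k} :
    (coreMap H).Adj a b ↔ H.Adj a b ∧ a ∈ coreVerts H ∧ b ∈ coreVerts H :=
  Iff.rfl

theorem minVC_subset_coreVerts : minVC H ⊆ coreVerts H :=
  subset_union_left.trans subset_union_left

theorem layer₁_subset_coreVerts : layer₁ H ⊆ coreVerts H :=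
  subset_union_right.trans subset_union_left

theorem layer₂_subset_coreVerts : layer₂ H ⊆ coreVerts H :=
  subset_union_right

theorem suppF_coreMap_subset : suppF (coreMap H) ⊆ coreVerts H := fun x hx => by
  obtain ⟨y, hxy⟩ := (mem_filter.1 hx).2
  exact hxy.2.1

theorem IsVC.swap_isTight {f : Fin k → Fin k} (hC : IsVC (coreMap H) C)
    (hSV : S ⊆ coreVerts H) (hSW : Disjoint S (minVC H)) (hinj : Set.InjOn f S)
    (hf : ∀ s ∈ S, f s ∈ nbrIn H (minVC H) s) (hS : IsTight (nbrIn H (minVC H)) S) :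
    IsVC (coreMap H) (C \ S ∪ S.biUnion (nbrIn H (minVC H))) ∧
      #(C \ S ∪ S.biUnion (nbrIn H (minVC H))) + #{s ∈ S ∩ C | f s ∈ C} ≤ #C := by
  have hTW : S.biUnion (nbrIn H (minVC H)) ⊆ minVC H :=
    biUnion_subset.2 fun _ _ => filter_subset _ _
  have hnbr : ∀ s ∈ S, ∀ y, (coreMap H).Adj s y → y ∈ S.biUnion (nbrIn H (minVC H)) :=
    fun s hs y hsy => mem_biUnion.2 ⟨s, hs, mem_filter.2
      ⟨((isMinVC_minVC H).1 hsy.1).resolve_left (disjoint_left.1 hSW hs), hsy.1⟩⟩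
  refine ⟨hC.sdiff_union hnbr, hC.card_sdiff_union_add_le
    (disjoint_of_subset_right hTW hSW) (hS.image_eq hinj hf).symm.subset fun s hs => ?_⟩
  have hfs := mem_filter.1 (hf s hs)
  exact coreMap_adj.2 ⟨hfs.2, hSV hs, minVC_subset_coreVerts hfs.1⟩

theorem IsVC.exists_swap (hC : IsVC (coreMap H) C)
    (hL : greedy (MatchableWithin H (minVC H) Av) ⊆ coreVerts H) (hAv : Disjoint Av (minVC H))
    (hv : v ∈ Av) (hv' : v ∉ greedy (MatchableWithin H (minVC H) Av)) :
    ∃ S ⊆ greedy (MatchableWithin H (minVC H) Av), ∃ f : Fin k → Fin k,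
      nbrIn H (minVC H) v ⊆ S.image f ∧ (∀ s ∈ S, H.Adj s (f s)) ∧
      IsVC (coreMap H) (C \ S ∪ S.image f) ∧
        #(C \ S ∪ S.image f) + #{s ∈ S ∩ C | f s ∈ C} ≤ #C := by
  have hL' := matchableWithin_greedy (H := H) (W := minVC H) (Av := Av)
  obtain ⟨S, hSL, hS, hvS⟩ := exists_isTight_of_not_mem_greedy hv hv'
  obtain ⟨f, hinj, hf⟩ := matchableInto_iff_matchable.1 hL'.2
  have himage := hS.image_eq (hinj.mono (coe_subset.2 hSL)) fun s hs => hf s (hSL hs)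
  refine ⟨S, hSL, f, himage ▸ hvS, fun s hs => (mem_filter.1 (hf s (hSL hs))).2,
    himage ▸ ?_⟩
  exact hC.swap_isTight (hSL.trans hL) (disjoint_of_subset_left (hSL.trans hL'.1) hAv)
    (hinj.mono (coe_subset.2 hSL)) (fun s hs => hf s (hSL hs)) hS

/-- Two swaps along tight sets `S₁ ⊆ layer₁ H` and `S₂ ⊆ layer₂ H` covering the neighbourhood
of `v` would turn a minimum cover missing `u` into a smaller one: the vertex of `S₂` matched to
`u` is counted twice after the first swap. -/
theorem mem_of_isMinVC_coreMap (hC : IsMinVC (coreMap H) C) (huv : H.Adj u v)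
    (hv : v ∉ coreVerts H) : u ∈ C := by
  simp only [coreVerts, mem_union, not_or] at hv
  obtain ⟨⟨hvW, hv₁⟩, hv₂⟩ := hv
  have huW : u ∈ minVC H := ((isMinVC_minVC H).1 huv).resolve_right hvW
  have huN : u ∈ nbrIn H (minVC H) v := mem_filter.2 ⟨huW, huv.symm⟩
  by_contra huC
  obtain ⟨S₁, hS₁, f₁, hvS₁, -, hC₁, hcard₁⟩ :=
    hC.1.exists_swap layer₁_subset_coreVerts disjoint_compl_left (mem_compl.2 hvW) hv₁
  set C₁ := C \ S₁ ∪ S₁.image f₁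
  obtain ⟨S₂, hS₂, f₂, hvS₂, hadj₂, hC₂, hcard₂⟩ :=
    hC₁.exists_swap layer₂_subset_coreVerts (disjoint_compl_left.mono_right subset_union_left)
    (mem_compl.2 fun h => (mem_union.1 h).elim hvW hv₁) hv₂
  obtain ⟨s, hs, rfl⟩ := mem_image.1 (hvS₂ huN)
  have hsC : s ∈ C := (hC.1 (coreMap_adj.2 ⟨hadj₂ s hs, layer₂_subset_coreVerts (hS₂ hs),
    minVC_subset_coreVerts huW⟩)).resolve_right huC
  have hsS₁ : s ∉ S₁ := fun h => mem_compl.1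
    ((matchableWithin_greedy (H := H)).1 (hS₂ hs)) (mem_union_right _ (hS₁ h))
  have hsC₁ : s ∈ C₁ := mem_union_left _ (mem_sdiff.2 ⟨hsC, hsS₁⟩)
  have huC₁ : f₂ s ∈ C₁ := mem_union_right _ (hvS₁ huN)
  have hdouble : 0 < #{x ∈ S₂ ∩ C₁ | f₂ x ∈ C₁} :=
    card_pos.2 ⟨s, by simp [hs, hsC₁, huC₁]⟩
  have := hC₂.vc_le_card
  have := hC.2
  omega

theorem isCore_coreMap (H : SimpleGraph (Fin k)) : IsCore (coreMap H) H := by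
  refine ⟨⟨coreVerts H, rfl⟩, fun C hC hCcard a b hab => ?_⟩
  by_cases ha : a ∈ coreVerts H
  · by_cases hb : b ∈ coreVerts H
    · exact hC (coreMap_adj.2 ⟨hab, ha, hb⟩)
    · exact Or.inl (mem_of_isMinVC_coreMap ⟨hC, hCcard⟩ hab hb)
  · exact Or.inr (mem_of_isMinVC_coreMap ⟨hC, hCcard⟩ hab.symm ha)

theorem card_suppF_coreMap_le (H : SimpleGraph (Fin k)) :
    #(suppF (coreMap H)) ≤ 3 * vc (coreMap H) := by
  obtain ⟨C, hC⟩ := exists_isMinVC (coreMap H)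
  have hvc : vc H ≤ vc (coreMap H) := hC.2 ▸ ((isCore_coreMap H).2 C hC.1 hC.2).vc_le_card
  have h₁ := (matchableWithin_greedy (H := H) (W := minVC H) (Av := (minVC H)ᶜ)).2.card_le
  have h₂ := (matchableWithin_greedy (H := H) (W := minVC H)
    (Av := (minVC H ∪ layer₁ H)ᶜ)).2.card_le
  calc #(suppF (coreMap H)) ≤ #(coreVerts H) := card_le_card suppF_coreMap_subset
    _ ≤ #(minVC H) + #(layer₁ H) + #(layer₂ H) :=
        (card_union_le _ _).trans (Nat.add_le_add_right (card_union_le _ _) _)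
    _ ≤ 3 * vc H := by rw [(isMinVC_minVC H).2] at h₁ h₂ ⊢; unfold layer₁ layer₂; omega
    _ ≤ 3 * vc (coreMap H) := by omega

end CoreMap

section Fibre

variable {F H : SimpleGraph (Fin k)} {C U Av : Finset (Fin k)} {a b v : Fin k}

/-- The set `E*_F` of the statement. -/
def EStar (F : SimpleGraph (Fin k)) : Set (Sym2 (Fin k)) :=
  {e | ∃ H, coreMap H = F ∧ e ∈ H.edgeSet \ F.edgeSet}

def IsStarExtension (F H : SimpleGraph (Fin k)) : Prop :=
  F.edgeSet ⊆ H.edgeSet ∧ H.edgeSet \ F.edgeSet ⊆ EStar F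

theorem isStarExtension_of_coreMap_eq (h : coreMap H = F) : IsStarExtension F H :=
  ⟨h ▸ SimpleGraph.edgeSet_mono fun _ _ hab => hab.1, fun _ he => ⟨H, h, he⟩⟩

theorem exists_of_mem_EStar {e : Sym2 (Fin k)} (he : e ∈ EStar F) :
    ∃ u v, (∀ C, IsMinVC F C → u ∈ C) ∧ v ∉ suppF F ∧ e = s(u, v) := by
  obtain ⟨H, rfl, heH, heF⟩ := he
  have key : ∀ {a b}, H.Adj a b → b ∉ coreVerts H →
      (∀ C, IsMinVC (coreMap H) C → a ∈ C) ∧ b ∉ suppF (coreMap H) := fun hab hb =>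
    ⟨fun _ hC => mem_of_isMinVC_coreMap hC hab hb, fun h => hb (suppF_coreMap_subset h)⟩
  induction e with
  | h a b =>
    rw [SimpleGraph.mem_edgeSet] at heH heF
    by_cases hb : b ∈ coreVerts H
    · have ha : a ∉ coreVerts H := fun ha => heF (coreMap_adj.2 ⟨heH, ha, hb⟩)
      exact ⟨b, a, (key heH.symm ha).1, (key heH.symm ha).2, Sym2.eq_swap⟩
    · exact ⟨a, b, (key heH hb).1, (key heH hb).2, rfl⟩

theorem IsStarExtension.le (h : IsStarExtension F H) : F ≤ H :=
  SimpleGraph.edgeSet_subset_edgeSet.1 h.1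

theorem IsStarExtension.exists_of_adj (h : IsStarExtension F H) (hab : H.Adj a b)
    (hF : ¬ F.Adj a b) :
    ∃ u v, (∀ C, IsMinVC F C → u ∈ C) ∧ v ∉ suppF F ∧ s(a, b) = s(u, v) :=
  exists_of_mem_EStar (h.2 ⟨hab, hF⟩)

theorem IsStarExtension.isVC_of_isMinVC (h : IsStarExtension F H) (hC : IsMinVC F C) :
    IsVC H C := fun a b hab => by
  by_cases hF : F.Adj a b
  · exact hC.1 hF
  · obtain ⟨u, v, hu, -, he⟩ := h.exists_of_adj hab hF
    rcases Sym2.eq_iff.1 he with ⟨rfl, rfl⟩ | ⟨rfl, rfl⟩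
    exacts [Or.inl (hu C hC), Or.inr (hu C hC)]

theorem IsStarExtension.isMinVC_iff (h : IsStarExtension F H) : IsMinVC H C ↔ IsMinVC F C := by
  obtain ⟨C₀, hC₀⟩ := exists_isMinVC F
  obtain ⟨C₁, hC₁⟩ := exists_isMinVC H
  have hle : vc H ≤ vc F := hC₀.2 ▸ (h.isVC_of_isMinVC hC₀).vc_le_card
  have hge : vc F ≤ vc H := hC₁.2 ▸ (hC₁.1.mono h.le).vc_le_card
  constructor
  · rintro ⟨hC, hcard⟩
    exact ⟨hC.mono h.le, by omega⟩
  · intro hC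
    exact ⟨h.isVC_of_isMinVC hC, by rw [hC.2]; omega⟩

theorem IsStarExtension.minVC_eq (h : IsStarExtension F H) : minVC H = minVC F :=
  congrArg Classical.epsilon (funext fun _ => propext h.isMinVC_iff)

theorem IsStarExtension.nbrIn_eq (h : IsStarExtension F H) (hv : v ∈ suppF F)
    (hvW : v ∉ minVC F) (W : Finset (Fin k)) : nbrIn H W v = nbrIn F W v := by
  refine filter_congr fun w _ => ⟨fun hvw => ?_, fun hvw => h.le hvw⟩
  by_contra hF
  obtain ⟨u, v', hu, hv', he⟩ := h.exists_of_adj hvw hF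
  rcases Sym2.eq_iff.1 he with ⟨rfl, rfl⟩ | ⟨rfl, rfl⟩
  exacts [hvW (hu _ (isMinVC_minVC F)), hv' hv]

theorem IsStarExtension.matchableInto_iff (h : IsStarExtension F H) (hU : U ⊆ suppF F)
    (hUW : Disjoint U (minVC F)) (W : Finset (Fin k)) :
    MatchableInto H U W ↔ MatchableInto F U W := by
  have hN : ∀ u ∈ U, nbrIn H W u = nbrIn F W u :=
    fun u hu => h.nbrIn_eq (hU hu) (disjoint_left.1 hUW hu) W
  rw [matchableInto_iff_matchable, matchableInto_iff_matchable]
  exact ⟨fun hm => hm.congr hN, fun hm => hm.congr fun u hu => (hN u hu).symm⟩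

/-- Otherwise `v` would be kept by the greedy scan of `H`, and the edge `vw` would survive in
`coreMap H = F`. -/
theorem not_matchableInto_insert_of_coreMap_eq {w : Fin k} (hH : coreMap H = F)
    (hout : greedy (MatchableWithin H (minVC F) Av) ⊆ coreVerts H)
    (hprefix : greedyPrefix (MatchableWithin H (minVC F) Av) v = U)
    (hvU : insert v U ⊆ Av) (hv : v ∉ suppF F) (hvw : H.Adj v w) (hw : w ∈ minVC F) :
    ¬ MatchableInto H (insert v U) (minVC F) := by
  have hvH : v ∉ greedy (MatchableWithin H (minVC F) Av) := fun hvH => by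
    have hwH : w ∈ coreVerts H :=
      minVC_subset_coreVerts ((isStarExtension_of_coreMap_eq hH).minVC_eq ▸ hw)
    exact hv (hH ▸ mem_filter.2 ⟨mem_univ v, w, coreMap_adj.2 ⟨hvw, hout hvH, hwH⟩⟩)
  have := not_insert_greedyPrefix_of_not_mem_greedy hvH
  rw [hprefix] at this
  exact fun hm => this ⟨hvU, hm⟩

/-- For `v ∈ V(E(F))` the neighbourhoods agree; for `v ∉ V(E(F))` each edge of `H` at `v` is
blocked in some graph with core `F`, and the blocking tight sets combine. -/
theorem IsStarExtension.matchableWithin_insert_iff (h : IsStarExtension F H)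
    (hAv : Disjoint Av (minVC F))
    (hout : ∀ H', coreMap H' = F → greedy (MatchableWithin H' (minVC F) Av) ⊆ coreVerts H')
    (hprefix : ∀ H', coreMap H' = F → greedyPrefix (MatchableWithin H' (minVC F) Av) v = U)
    (hU : MatchableWithin F (minVC F) Av U) :
    MatchableWithin H (minVC F) Av (insert v U) ↔
      MatchableWithin F (minVC F) Av (insert v U) := by
  refine and_congr_right fun hvU => ?_
  have hUs : U ⊆ suppF F := hU.2.subset_suppF
  have hUW : Disjoint (insert v U) (minVC F) := disjoint_of_subset_left hvU hAv
  by_cases hv : v ∈ suppF F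
  · exact h.matchableInto_iff (insert_subset hv hUs) hUW _
  refine iff_of_false ?_ fun hm => hv (hm.subset_suppF (mem_insert_self v U))
  rw [matchableInto_iff_matchable]
  refine not_matchable_insert_of_forall (matchableInto_iff_matchable.1 hU.2)
    (fun hvU' => hv (hUs hvU')) (fun u hu => h.nbrIn_eq (hUs hu)
      (disjoint_left.1 hUW (mem_insert_of_mem hu)) _) fun w hw => ?_
  obtain ⟨hwW, hvw⟩ := mem_filter.1 hw
  have hvwF : s(v, w) ∈ H.edgeSet \ F.edgeSet :=
    ⟨hvw, fun (hF : F.Adj v w) => hv (mem_filter.2 ⟨mem_univ v, w, hF⟩)⟩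
  obtain ⟨H', hH', hvw', -⟩ := h.2 hvwF
  have h' := isStarExtension_of_coreMap_eq hH'
  refine ⟨nbrIn H' (minVC F), fun u hu => h'.nbrIn_eq (hUs hu)
    (disjoint_left.1 hUW (mem_insert_of_mem hu)) _, mem_filter.2 ⟨hwW, hvw'⟩, ?_⟩
  rw [← matchableInto_iff_matchable]
  exact not_matchableInto_insert_of_coreMap_eq hH' (hout H' hH') (hprefix H' hH') hvU hv hvw' hwW

theorem greedyPrefix_eq_of_isStarExtension (hAv : Disjoint Av (minVC F))
    (hout : ∀ H', coreMap H' = F → greedy (MatchableWithin H' (minVC F) Av) ⊆ coreVerts H')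
    (n : ℕ) (H : SimpleGraph (Fin k)) (h : IsStarExtension F H) :
    greedyPrefix (MatchableWithin H (minVC F) Av) n =
      greedyPrefix (MatchableWithin F (minVC F) Av) n := by
  induction n generalizing H with
  | zero => rfl
  | succ n ih =>
    refine greedyPrefix_succ_congr (ih H h) fun hn => ?_
    rw [ih H h]
    exact h.matchableWithin_insert_iff hAv hout
      (fun H' hH' => ih H' (isStarExtension_of_coreMap_eq hH'))
      (greedyPrefix_spec matchableWithin_empty n)

theorem IsStarExtension.layer₁_eq (h : IsStarExtension F H) : layer₁ H = layer₁ F := by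
  rw [layer₁, h.minVC_eq]
  refine greedyPrefix_eq_of_isStarExtension disjoint_compl_left (fun H' hH' => ?_) k H h
  rw [← (isStarExtension_of_coreMap_eq hH').minVC_eq]
  exact layer₁_subset_coreVerts

theorem IsStarExtension.layer₂_eq (h : IsStarExtension F H) : layer₂ H = layer₂ F := by
  rw [layer₂, h.minVC_eq, h.layer₁_eq]
  refine greedyPrefix_eq_of_isStarExtension (disjoint_compl_left.mono_right subset_union_left)
    (fun H' hH' => ?_) k H h
  have h' := isStarExtension_of_coreMap_eq hH'
  rw [← h'.minVC_eq, ← h'.layer₁_eq]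
  exact layer₂_subset_coreVerts

theorem IsStarExtension.coreVerts_eq (h : IsStarExtension F H) : coreVerts H = coreVerts F := by
  rw [coreVerts, coreVerts, h.minVC_eq, h.layer₁_eq, h.layer₂_eq]

theorem coreVerts_subset_suppF (F : SimpleGraph (Fin k)) : coreVerts F ⊆ suppF F :=
  union_subset (union_subset (isMinVC_minVC F).subset_suppF
    (matchableWithin_greedy (H := F)).2.subset_suppF)
    (matchableWithin_greedy (H := F)).2.subset_suppF

theorem IsStarExtension.coreMap_eq {H₀ : SimpleGraph (Fin k)} (h : IsStarExtension F H)
    (h₀ : coreMap H₀ = F) : coreMap H = F := by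
  ext a b
  rw [coreMap_adj, h.coreVerts_eq]
  constructor
  · rintro ⟨hab, ha, hb⟩
    by_contra hF
    obtain ⟨u, v, -, hv, he⟩ := h.exists_of_adj hab hF
    rcases Sym2.eq_iff.1 he with ⟨rfl, rfl⟩ | ⟨rfl, rfl⟩
    exacts [hv (coreVerts_subset_suppF F hb), hv (coreVerts_subset_suppF F ha)]
  · intro hab
    obtain ⟨-, ha, hb⟩ := coreMap_adj.1 (h₀ ▸ hab : (coreMap H₀).Adj a b)
    rw [(isStarExtension_of_coreMap_eq h₀).coreVerts_eq] at ha hb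
    exact ⟨h.le hab, ha, hb⟩

end Fibre

/-- Theorem `lem:compression`: there is a map `core` sending each graph `H` on
`[k]` to a core of `H` such that every `F` in the image satisfies `|V(E(F))| ≤ 3·vc(F)`, and
there is an edge set `E*_F` consisting of pairs with exactly one endpoint in `V(E(F))` such that
`core(H) = F` iff `E(H) = E(F) ∪ E` for some `E ⊆ E*_F`. -/
theorem exists_core_map (k : ℕ) :
    ∃ core : SimpleGraph (Fin k) → SimpleGraph (Fin k),
      (∀ H, IsCore (core H) H) ∧
      (∀ F, (∃ H, core H = F) → (suppF F).card ≤ 3 * vc F) ∧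
      (∀ F, (∃ H, core H = F) →
        ∃ EStar : Set (Sym2 (Fin k)),
          (∀ e ∈ EStar, ∃ u v : Fin k, u ∈ suppF F ∧ v ∉ suppF F ∧ e = s(u, v)) ∧
          (∀ H : SimpleGraph (Fin k),
            core H = F ↔ F.edgeSet ⊆ H.edgeSet ∧ H.edgeSet \ F.edgeSet ⊆ EStar)) := by
  refine ⟨coreMap, isCore_coreMap, fun F ⟨H, hH⟩ => hH ▸ card_suppF_coreMap_le H,
    fun F ⟨H₀, h₀⟩ => ⟨EStar F, fun e he => ?_, fun H =>
      ⟨isStarExtension_of_coreMap_eq, fun h => IsStarExtension.coreMap_eq h h₀⟩⟩⟩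
  obtain ⟨u, v, hu, hv, rfl⟩ := exists_of_mem_EStar he
  exact ⟨u, v, (isMinVC_minVC F).subset_suppF (hu _ (isMinVC_minVC F)), hv, rfl⟩

end CliqueSA
end

section
/- Let H be a graph on vertex set [k], let W be a minimum vertex cover of H, and let U₁ ⊆ [k] ∖ W be a maximal (with respect to set inclusion) subset such that there is a matching in H between U₁ and W covering every vertex of U₁. Then vc(H) ≤ vc(H[W ∪ U₁]), and hence vc(H) = vc(H[W ∪ U₁]). -/
open Finset
open scoped Classical

/-! Write `N(S)` for the set of neighbours in `W` of a set `S`. For `x ∉ W ∪ U₁`, maximality of `U₁`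
and Hall's theorem give a set `T ⊆ U₁` with `|N(T)| ≤ |T|` and `N(x) ⊆ N(T)` (Hall's condition
fails for `U₁ ∪ {x}` only at sets containing `x`). As `S ↦ |N(S)|` is submodular and Hall's
condition holds on `U₁`, such tight sets are closed under union, so one `T` serves for all `x`.
Given a vertex cover `C` of `H[W ∪ U₁]`, the set `(C ∖ T) ∪ N(T)` covers every edge of `H`, and it
is no larger than `C` because `N(T ∖ C) ⊆ C` and `|T ∖ C| ≤ |N(T ∖ C)|`. -/

namespace CliqueSA

variable {k : ℕ}

lemma vc_le_card {H : SimpleGraph (Fin k)} {C : Finset (Fin k)} (h : IsVC H C) :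
    vc H ≤ #C :=
  Nat.sInf_le ⟨C, h, rfl⟩

lemma exists_isVC_card_eq_vc (H : SimpleGraph (Fin k)) : ∃ C, IsVC H C ∧ #C = vc H :=
  Nat.sInf_mem (s := {m | ∃ C, IsVC H C ∧ #C = m}) ⟨_, univ, fun u _ _ => Or.inl (mem_univ u), rfl⟩

noncomputable def neighborsIn (H : SimpleGraph (Fin k)) (W S : Finset (Fin k)) : Finset (Fin k) :=
  S.biUnion fun v => W.filter (H.Adj v)

section neighborsIn

variable {H : SimpleGraph (Fin k)} {W S S' U : Finset (Fin k)}

lemma mem_neighborsIn {w : Fin k} : w ∈ neighborsIn H W S ↔ w ∈ W ∧ ∃ v ∈ S, H.Adj v w := by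
  simp only [neighborsIn, mem_biUnion, mem_filter]
  tauto

lemma neighborsIn_mono (h : S ⊆ S') : neighborsIn H W S ⊆ neighborsIn H W S' :=
  biUnion_subset_biUnion_of_subset_left _ h

lemma neighborsIn_union : neighborsIn H W (S ∪ S') = neighborsIn H W S ∪ neighborsIn H W S' :=
  union_biUnion

lemma MatchableInto.card_le_card_neighborsIn (hU : MatchableInto H U W) (hS : S ⊆ U) :
    #S ≤ #(neighborsIn H W S) := by
  obtain ⟨f, hinj, hf⟩ := hU
  rw [← card_image_of_injOn (hinj.mono (coe_subset.mpr hS))]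
  refine card_le_card fun w hw => ?_
  obtain ⟨v, hv, rfl⟩ := mem_image.mp hw
  exact mem_neighborsIn.mpr ⟨(hf v (hS hv)).1, v, hv, (hf v (hS hv)).2⟩

lemma matchableInto_iff_forall_card_le :
    MatchableInto H U W ↔ ∀ S ⊆ U, #S ≤ #(neighborsIn H W S) := by
  refine ⟨fun hU _ hS => MatchableInto.card_le_card_neighborsIn hU hS, fun hall => ?_⟩
  obtain ⟨g, hginj, hg⟩ := (all_card_le_biUnion_card_iff_exists_injective
    fun v : U => W.filter (H.Adj v)).mp fun s : Finset U => by
      simpa [neighborsIn, image_biUnion, card_image_of_injective _ Subtype.val_injective]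
        using hall (s.image Subtype.val) fun v hv => by
          obtain ⟨v, -, rfl⟩ := mem_image.mp hv
          exact v.2
  refine ⟨fun v => if hv : v ∈ U then g ⟨v, hv⟩ else v, fun a ha b hb hab => ?_, fun v hv => ?_⟩
  · simp only [mem_coe] at ha hb
    exact congrArg Subtype.val (hginj (by simpa [ha, hb] using hab))
  · simpa [hv] using hg ⟨v, hv⟩

lemma card_neighborsIn_union_le (hU : MatchableInto H U W) (hS : S ⊆ U)
    (htS : #(neighborsIn H W S) ≤ #S) (htS' : #(neighborsIn H W S') ≤ #S') :
    #(neighborsIn H W (S ∪ S')) ≤ #(S ∪ S') := by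
  have hinter : #(S ∩ S') ≤ #(neighborsIn H W (S ∩ S')) :=
    MatchableInto.card_le_card_neighborsIn hU (inter_subset_left.trans hS)
  have hsub : neighborsIn H W (S ∩ S') ⊆ neighborsIn H W S ∩ neighborsIn H W S' :=
    subset_inter (neighborsIn_mono inter_subset_left) (neighborsIn_mono inter_subset_right)
  have := card_le_card hsub
  have := card_union_add_card_inter S S'
  have := card_union_add_card_inter (neighborsIn H W S) (neighborsIn H W S')
  rw [neighborsIn_union]
  omega

lemma exists_subset_card_neighborsIn_le_of_not_matchableInto_insert {x : Fin k}
    (hU : MatchableInto H U W) (hx : ¬ MatchableInto H (insert x U) W) :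
    ∃ T ⊆ U, #(neighborsIn H W T) ≤ #T ∧ neighborsIn H W {x} ⊆ neighborsIn H W T := by
  obtain ⟨S, hSU, hS⟩ : ∃ S ⊆ insert x U, #(neighborsIn H W S) < #S := by
    simpa [matchableInto_iff_forall_card_le] using hx
  have hTU : S.erase x ⊆ U := fun v hv =>
    (mem_insert.mp (hSU (mem_of_mem_erase hv))).resolve_left (ne_of_mem_erase hv)
  have hxS : x ∈ S := by
    by_contra hxS
    have := MatchableInto.card_le_card_neighborsIn hU ((erase_eq_of_notMem hxS) ▸ hTU)
    omega
  have hT := MatchableInto.card_le_card_neighborsIn hU hTU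
  have hsub : neighborsIn H W (S.erase x) ⊆ neighborsIn H W S := neighborsIn_mono (erase_subset x S)
  have := card_erase_of_mem hxS
  have heq : neighborsIn H W (S.erase x) = neighborsIn H W S :=
    eq_of_subset_of_card_le hsub (by omega)
  refine ⟨S.erase x, hTU, by rw [heq]; omega, ?_⟩
  exact heq ▸ neighborsIn_mono (singleton_subset_iff.mpr hxS)

lemma MaximalMatched.exists_subset_card_neighborsIn_le {Avail : Finset (Fin k)}
    (h : MaximalMatched H W Avail U) :
    ∃ T ⊆ U, #(neighborsIn H W T) ≤ #T ∧
      ∀ x ∈ Avail, x ∉ U → neighborsIn H W {x} ⊆ neighborsIn H W T := by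
  obtain ⟨hUA, hU, hmax⟩ := h
  set tight := U.powerset.filter fun T => #(neighborsIn H W T) ≤ #T
  obtain ⟨hTU, hT⟩ : tight.sup id ⊆ U ∧ #(neighborsIn H W (tight.sup id)) ≤ #(tight.sup id) :=
    sup_induction (p := fun T => T ⊆ U ∧ #(neighborsIn H W T) ≤ #T)
      ⟨empty_subset U, by simp [neighborsIn]⟩
      (fun T₁ h₁ T₂ h₂ => ⟨union_subset h₁.1 h₂.1, card_neighborsIn_union_le hU h₁.1 h₁.2 h₂.2⟩)
      fun T hT => by simpa [tight] using hT
  refine ⟨tight.sup id, hTU, hT, fun x hxA hxU => ?_⟩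
  obtain ⟨T, hTU, hT, hxT⟩ := exists_subset_card_neighborsIn_le_of_not_matchableInto_insert hU
    (hmax _ (ssubset_insert hxU) (insert_subset hxA hUA))
  exact hxT.trans (neighborsIn_mono (le_sup (f := id) (mem_filter.mpr ⟨mem_powerset.mpr hTU, hT⟩)))

end neighborsIn

section exchange

variable {H : SimpleGraph (Fin k)} {W U T C : Finset (Fin k)}

lemma isVC_sdiff_union_neighborsIn (hW : IsVC H W) (hTW : Disjoint T W)
    (hX : ∀ x, x ∉ W → x ∉ U → neighborsIn H W {x} ⊆ neighborsIn H W T)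
    (hC : IsVC (restrict H (W ∪ U)) C) : IsVC H ((C \ T) ∪ neighborsIn H W T) := by
  have hcover : ∀ a b, H.Adj a b → a ∈ W →
      a ∈ (C \ T) ∪ neighborsIn H W T ∨ b ∈ (C \ T) ∪ neighborsIn H W T := by
    intro a b hab ha
    have haT : a ∉ T := disjoint_right.mp hTW ha
    by_cases hb : b ∈ W ∪ U
    · rcases hC ⟨hab, mem_union_left U ha, hb⟩ with haC | hbC
      · exact Or.inl (mem_union_left _ (mem_sdiff.mpr ⟨haC, haT⟩))
      · by_cases hbT : b ∈ T
        · exact Or.inl (mem_union_right _ (mem_neighborsIn.mpr ⟨ha, b, hbT, hab.symm⟩))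
        · exact Or.inr (mem_union_left _ (mem_sdiff.mpr ⟨hbC, hbT⟩))
    · rw [mem_union, not_or] at hb
      exact Or.inl (mem_union_right _
        (hX b hb.1 hb.2 (mem_neighborsIn.mpr ⟨ha, b, mem_singleton_self b, hab.symm⟩)))
  intro a b hab
  rcases hW hab with ha | hb
  · exact hcover a b hab ha
  · exact (hcover b a hab.symm hb).symm

lemma card_sdiff_union_neighborsIn_le (hU : MatchableInto H U W) (hTU : T ⊆ U)
    (hTW : Disjoint T W) (hT : #(neighborsIn H W T) ≤ #T) (hC : IsVC (restrict H (W ∪ U)) C) :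
    #((C \ T) ∪ neighborsIn H W T) ≤ #C := by
  have hsub : neighborsIn H W T \ (C \ T) ⊆ neighborsIn H W T \ neighborsIn H W (T \ C) := by
    refine fun w hw => mem_sdiff.mpr ⟨(mem_sdiff.mp hw).1, fun hw' => (mem_sdiff.mp hw).2 ?_⟩
    obtain ⟨hwW, t, ht, htw⟩ := mem_neighborsIn.mp hw'
    rw [mem_sdiff] at ht
    have hwC := (hC ⟨htw, mem_union_right W (hTU ht.1), mem_union_left U hwW⟩).resolve_left ht.2
    exact mem_sdiff.mpr ⟨hwC, disjoint_right.mp hTW hwW⟩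
  have hunion := card_union_le (C \ T) (neighborsIn H W T \ (C \ T))
  rw [union_sdiff_self_eq_union] at hunion
  have hmono : neighborsIn H W (T \ C) ⊆ neighborsIn H W T := neighborsIn_mono sdiff_subset
  have := card_le_card hsub
  have := card_sdiff_of_subset hmono
  have := card_le_card hmono
  have := MatchableInto.card_le_card_neighborsIn hU (sdiff_subset.trans hTU : T \ C ⊆ U)
  have := card_sdiff_add_card_inter C T
  have := card_sdiff_add_card_inter T C
  rw [inter_comm] at this
  omega

end exchange

/-- Lemma `cl:core-vc`: if `W` is a minimum vertex cover of `H` and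
`U₁ ⊆ [k] ∖ W` is maximal with a matching in `H` from `U₁` into `W` covering `U₁`, then
`vc(H) ≤ vc(H[W ∪ U₁])`, hence `vc(H) = vc(H[W ∪ U₁])`. -/
theorem vc_restrict_core (k : ℕ) (H : SimpleGraph (Fin k)) (W U₁ : Finset (Fin k))
    (hW : IsMinVC H W)
    (hU₁ : MaximalMatched H W (Finset.univ \ W) U₁) :
    vc H ≤ vc (restrict H (W ∪ U₁)) ∧ vc H = vc (restrict H (W ∪ U₁)) := by
  have hUW : Disjoint U₁ W := (subset_sdiff.mp hU₁.1).2
  obtain ⟨T, hTU, hT, hX⟩ := hU₁.exists_subset_card_neighborsIn_le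
  have hTW : Disjoint T W := hUW.mono_left hTU
  have hle : vc H ≤ vc (restrict H (W ∪ U₁)) := by
    obtain ⟨C, hC, hCcard⟩ := exists_isVC_card_eq_vc (restrict H (W ∪ U₁))
    calc vc H ≤ #((C \ T) ∪ neighborsIn H W T) :=
          vc_le_card (isVC_sdiff_union_neighborsIn hW.1 hTW
            (fun x hxW hxU => hX x (mem_sdiff.mpr ⟨mem_univ x, hxW⟩) hxU) hC)
      _ ≤ #C := card_sdiff_union_neighborsIn_le hU₁.2.1 hTU hTW hT hC
      _ = vc (restrict H (W ∪ U₁)) := hCcard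
  have hge : vc (restrict H (W ∪ U₁)) ≤ vc H := hW.2 ▸ vc_le_card fun _ _ h => hW.1 h.1
  exact ⟨hle, hle.antisymm hge⟩

end CliqueSA
end

section
/- Let a, b, c, f ≥ 1 be integers with b > 12·ln(4a), and let γ be a real number with (3a·ln(4af)/c)^{1/2} < γ < 1. Let U be a finite set with |U| = a·b and let ℱ ⊆ 2^U be a family of subsets of U with |ℱ| = f, each member of which has size at least c. Then there is a partition U = U_1 ∪ ⋯ ∪ U_a into a parts such that (1) b/2 ≤ |U_i| ≤ 3b/2 for all 1 ≤ i ≤ a, and (2) for every set F ∈ ℱ and every 1 ≤ i ≤ a, (1 − γ)·|F|/a ≤ |F ∩ U_i| ≤ (1 + γ)·|F|/a. -/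
/-!
Assign every element of `U` independently and uniformly to one of the `a` parts, i.e. count
among all `a ^ |U|` maps `ω : U → Fin a`. For a fixed set `S` and part `i`, the number of
elements of `S` sent to `i` has generating function `∑_ω r ^ #(S ∩ ω⁻¹ i) =
(a - 1 + r) ^ |S| * a ^ (|U| - |S|)`, and Markov's inequality at `r = 1 ± δ` gives the
multiplicative Chernoff bounds: a fraction at most `exp (-(|S| / a) * klFun (1 ± δ))
≤ exp (-δ² |S| / (3a))` of the maps put `S` unevenly into part `i`. With `S = U` and `δ = 1/2`
the bound on `b` makes the maps with a badly sized part fewer than half of all maps; with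
`δ = γ` the bound on `γ` does the same for the `f` sets of `ℱ` together. Any remaining map has
the required fibres.
-/

open Finset Real InformationTheory

lemma sq_div_two_le_klFun {x : ℝ} (hx0 : 0 < x) (hx1 : x ≤ 1) : (x - 1) ^ 2 / 2 ≤ klFun x := by
  let g : ℝ → ℝ := fun y ↦ klFun y - (y - 1) ^ 2 / 2
  have hg : ∀ y ∈ Set.Icc x 1, HasDerivAt g (log y - (y - 1)) y := fun y hy ↦ by
    refine ((hasDerivAt_klFun (hx0.trans_le hy.1).ne').sub
      ((((hasDerivAt_id y).sub_const 1).pow 2).div_const 2)).congr_deriv ?_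
    simp
  have hanti : AntitoneOn g (Set.Icc x 1) :=
    antitoneOn_of_hasDerivWithinAt_nonpos (convex_Icc x 1)
      (HasDerivAt.continuousOn hg)
      (fun y hy ↦ (hg y (interior_subset hy)).hasDerivWithinAt)
      (fun y hy ↦ by
        rw [interior_Icc] at hy
        linarith [log_le_sub_one_of_pos (hx0.trans hy.1)])
  have := hanti ⟨le_rfl, hx1⟩ ⟨hx1, le_rfl⟩ hx1
  simp only [g, klFun_one] at this
  linarith

lemma sq_div_three_le_klFun {x : ℝ} (hx1 : 1 ≤ x) (hx2 : x ≤ 2) : (x - 1) ^ 2 / 3 ≤ klFun x := by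
  let g : ℝ → ℝ := fun y ↦ klFun y - (y - 1) ^ 2 / 3
  have hg : ∀ y ∈ Set.Icc 1 x, HasDerivAt g (log y - 2 * (y - 1) / 3) y := fun y hy ↦ by
    refine ((hasDerivAt_klFun (by linarith [hy.1] : y ≠ 0)).sub
      ((((hasDerivAt_id y).sub_const 1).pow 2).div_const 3)).congr_deriv ?_
    simp
  have hlog : ∀ y ∈ Set.Icc (1 : ℝ) 2, 2 * (y - 1) / 3 ≤ log y := fun y hy ↦ by
    have hconc := strictConcaveOn_log_Ioi.concaveOn.2 (Set.mem_Ioi.2 one_pos)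
      (Set.mem_Ioi.2 two_pos) (by linarith [hy.2] : 0 ≤ 2 - y) (by linarith [hy.1] : 0 ≤ y - 1)
      (by ring)
    rw [smul_eq_mul, smul_eq_mul, smul_eq_mul, smul_eq_mul, log_one,
      show (2 - y) * 1 + (y - 1) * 2 = y by ring] at hconc
    nlinarith [log_two_gt_d9, hy.1]
  have hmono : MonotoneOn g (Set.Icc 1 x) :=
    monotoneOn_of_hasDerivWithinAt_nonneg (convex_Icc 1 x)
      (HasDerivAt.continuousOn hg)
      (fun y hy ↦ (hg y (interior_subset hy)).hasDerivWithinAt)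
      (fun y hy ↦ by
        rw [interior_Icc] at hy
        linarith [hlog y ⟨hy.1.le, by linarith [hy.2]⟩])
  have := hmono ⟨le_rfl, hx1⟩ ⟨hx1, le_rfl⟩ hx1
  simp only [g, klFun_one] at this
  linarith

lemma two_mul_mul_exp_neg_lt {a m y : ℝ} (ha : 0 < a) (hm : 0 < m) (h : log (4 * a * m) < y) :
    2 * a * exp (-y) < 1 / (2 * m) := by
  have h4am : 0 < 4 * a * m := by positivity
  calc 2 * a * exp (-y) < 2 * a * (4 * a * m)⁻¹ := by
        rw [exp_neg]
        gcongr
        exact (log_lt_iff_lt_exp h4am).1 h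
    _ = 1 / (2 * m) := by field_simp; ring

lemma lt_sq_mul_div_of_sqrt_lt {k L c n γ : ℝ} (hk : 0 < k) (hc : 0 < c) (hcn : c ≤ n)
    (h : √(k * L / c) < γ) : L < γ ^ 2 * n / k := by
  rw [sqrt_lt' ((sqrt_nonneg _).trans_lt h), div_lt_iff₀ hc] at h
  rw [lt_div_iff₀ hk]
  nlinarith [sq_nonneg γ]

section

variable {U ι : Type*} [Fintype U] [DecidableEq U] [Fintype ι] [DecidableEq ι]

lemma sum_pow_card_filter_eq {R : Type*} [CommRing R] (S : Finset U) (i : ι) (r : R) :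
    ∑ ω : U → ι, r ^ #{u ∈ S | ω u = i} =
      (Fintype.card ι - 1 + r) ^ #S * (Fintype.card ι : R) ^ (Fintype.card U - #S) := by
  have hω : ∀ ω : U → ι, r ^ #{u ∈ S | ω u = i} = ∏ u, if u ∈ S ∧ ω u = i then r else 1 := by
    intro ω
    rw [prod_ite, prod_const, prod_const_one, mul_one]
    congr 2
    ext u
    simp
  have hu : ∀ u, ∑ j : ι, (if u ∈ S ∧ j = i then r else 1) =
      if u ∈ S then Fintype.card ι - 1 + r else (Fintype.card ι : R) := by
    intro u
    split_ifs with huS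
    · have : ∀ j, (if u ∈ S ∧ j = i then r else 1) = 1 + if j = i then r - 1 else 0 := by
        intro j; split_ifs <;> simp_all
      simp only [this, sum_add_distrib, sum_const, card_univ, nsmul_eq_mul, mul_one, sum_ite_eq',
        mem_univ, if_true]
      ring
    · simp [huS]
  simp_rw [hω]
  rw [← Fintype.prod_sum (fun u j ↦ if u ∈ S ∧ j = i then r else 1)]
  simp_rw [hu]
  rw [prod_ite, prod_const, prod_const, filter_mem_eq_inter, univ_inter, filter_not,
    filter_mem_eq_inter, univ_inter, card_sdiff, card_univ, inter_univ]

lemma card_tail_le_exp_neg_klFun [Nonempty ι] (S : Finset U) (i : ι) {r : ℝ} (hr : 0 < r) :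
    (#{ω : U → ι | r ^ (r * #S / Fintype.card ι) ≤ r ^ (#{u ∈ S | ω u = i} : ℝ)} : ℝ) ≤
      exp (-(#S / Fintype.card ι * klFun r)) * Fintype.card ι ^ Fintype.card U := by
  set a : ℝ := (Fintype.card ι : ℝ)
  set n := #S
  set t := r * n / a
  have ha : 1 ≤ a := Nat.one_le_cast.2 Fintype.card_pos
  have markov : (#{ω : U → ι | r ^ t ≤ r ^ (#{u ∈ S | ω u = i} : ℝ)} : ℝ) * r ^ t ≤
      ∑ ω : U → ι, r ^ #{u ∈ S | ω u = i} := by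
    simp_rw [← rpow_natCast]
    calc _ = ∑ ω ∈ {ω : U → ι | r ^ t ≤ r ^ (#{u ∈ S | ω u = i} : ℝ)}, r ^ t := by
          rw [sum_const, nsmul_eq_mul]
      _ ≤ ∑ ω ∈ {ω : U → ι | r ^ t ≤ r ^ (#{u ∈ S | ω u = i} : ℝ)},
            r ^ (#{u ∈ S | ω u = i} : ℝ) := sum_le_sum fun ω hω ↦ (mem_filter.1 hω).2
      _ ≤ _ := sum_le_sum_of_subset_of_nonneg (filter_subset _ _) fun _ _ _ ↦ by positivity
  have hmgf : a - 1 + r ≤ a * exp ((r - 1) / a) := by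
    calc a - 1 + r = a * ((r - 1) / a + 1) := by field_simp; ring
      _ ≤ a * exp ((r - 1) / a) := by gcongr; exact add_one_le_exp _
  rw [sum_pow_card_filter_eq, ← le_div_iff₀ (by positivity)] at markov
  calc _ ≤ _ := markov
    _ ≤ (a * exp ((r - 1) / a)) ^ n * a ^ (Fintype.card U - n) / r ^ t := by
        gcongr
    _ = _ := by
        rw [mul_pow, mul_comm (a ^ n), mul_assoc, pow_mul_pow_sub _ (card_le_univ S),
          rpow_def_of_pos hr, ← exp_nat_mul, mul_div_right_comm, ← exp_sub, klFun_apply]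
        congr 2
        ring

lemma card_upper_tail_le [Nonempty ι] (S : Finset U) (i : ι) {δ : ℝ} (hδ0 : 0 ≤ δ) (hδ1 : δ ≤ 1) :
    (#{ω : U → ι | (1 + δ) * #S / Fintype.card ι ≤ #{u ∈ S | ω u = i}} : ℝ) ≤
      exp (-(δ ^ 2 * #S / (3 * Fintype.card ι))) * Fintype.card ι ^ Fintype.card U := by
  have hr : 1 ≤ 1 + δ := by linarith
  calc _ ≤ (#{ω : U → ι | (1 + δ) ^ ((1 + δ) * #S / Fintype.card ι) ≤
          (1 + δ) ^ (#{u ∈ S | ω u = i} : ℝ)} : ℝ) := by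
        refine Nat.cast_le.2 (card_le_card fun ω hω ↦ ?_)
        simp only [mem_filter, mem_univ, true_and] at hω ⊢
        exact rpow_le_rpow_of_exponent_le hr hω
    _ ≤ _ := card_tail_le_exp_neg_klFun S i (by linarith)
    _ ≤ _ := by
        have := sq_div_three_le_klFun hr (by linarith)
        gcongr
        convert mul_le_mul_of_nonneg_left this (by positivity : (0 : ℝ) ≤ #S / Fintype.card ι)
          using 1
        ring

lemma card_lower_tail_le [Nonempty ι] (S : Finset U) (i : ι) {δ : ℝ} (hδ0 : 0 ≤ δ) (hδ1 : δ < 1) :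
    (#{ω : U → ι | (#{u ∈ S | ω u = i} : ℝ) ≤ (1 - δ) * #S / Fintype.card ι} : ℝ) ≤
      exp (-(δ ^ 2 * #S / (2 * Fintype.card ι))) * Fintype.card ι ^ Fintype.card U := by
  have hr0 : 0 < 1 - δ := by linarith
  have hr1 : 1 - δ ≤ 1 := by linarith
  calc _ ≤ (#{ω : U → ι | (1 - δ) ^ ((1 - δ) * #S / Fintype.card ι) ≤
          (1 - δ) ^ (#{u ∈ S | ω u = i} : ℝ)} : ℝ) := by
        refine Nat.cast_le.2 (card_le_card fun ω hω ↦ ?_)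
        simp only [mem_filter, mem_univ, true_and] at hω ⊢
        exact rpow_le_rpow_of_exponent_ge hr0 hr1 hω
    _ ≤ _ := card_tail_le_exp_neg_klFun S i hr0
    _ ≤ _ := by
        have := sq_div_two_le_klFun hr0 hr1
        gcongr
        convert mul_le_mul_of_nonneg_left this (by positivity : (0 : ℝ) ≤ #S / Fintype.card ι)
          using 1
        ring

def SplitsEvenly (δ : ℝ) (S : Finset U) (ω : U → ι) : Prop :=
  ∀ i, (1 - δ) * #S / Fintype.card ι ≤ #{u ∈ S | ω u = i} ∧
    (#{u ∈ S | ω u = i} : ℝ) ≤ (1 + δ) * #S / Fintype.card ι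

noncomputable instance (δ : ℝ) (S : Finset U) : DecidablePred (SplitsEvenly (ι := ι) δ S) :=
  fun _ ↦ inferInstanceAs (Decidable (∀ _, _ ∧ _))

lemma card_not_splitsEvenly_le [Nonempty ι] (S : Finset U) {δ : ℝ} (hδ0 : 0 ≤ δ) (hδ1 : δ < 1) :
    (#{ω : U → ι | ¬SplitsEvenly δ S ω} : ℝ) ≤
      2 * Fintype.card ι * exp (-(δ ^ 2 * #S / (3 * Fintype.card ι))) *
        Fintype.card ι ^ Fintype.card U := by
  let low (i : ι) : Finset (U → ι) :=
    {ω | (#{u ∈ S | ω u = i} : ℝ) ≤ (1 - δ) * #S / Fintype.card ι}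
  let up (i : ι) : Finset (U → ι) := {ω | (1 + δ) * #S / Fintype.card ι ≤ #{u ∈ S | ω u = i}}
  have hcover :
      ({ω | ¬SplitsEvenly δ S ω} : Finset (U → ι)) ⊆ univ.biUnion fun i ↦ low i ∪ up i := by
    intro ω hω
    simp only [SplitsEvenly, not_forall, not_and_or, not_le, mem_filter, mem_univ, true_and,
      mem_biUnion, mem_union, low, up] at hω ⊢
    obtain ⟨i, hi | hi⟩ := hω
    exacts [⟨i, .inl hi.le⟩, ⟨i, .inr hi.le⟩]
  have hlow : ∀ i, (#(low i) : ℝ) ≤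
      exp (-(δ ^ 2 * #S / (3 * Fintype.card ι))) * Fintype.card ι ^ Fintype.card U := fun i ↦
    (card_lower_tail_le S i hδ0 hδ1).trans (by gcongr; norm_num)
  have hup := fun i : ι ↦ card_upper_tail_le S i hδ0 hδ1.le
  calc (#{ω : U → ι | ¬SplitsEvenly δ S ω} : ℝ) ≤ ∑ i, ((#(low i) : ℝ) + #(up i)) := by
        exact_mod_cast (card_le_card hcover).trans
          (card_biUnion_le.trans (sum_le_sum fun i _ ↦ card_union_le _ _))
    _ ≤ ∑ _i : ι, 2 * (exp (-(δ ^ 2 * #S / (3 * Fintype.card ι))) *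
          Fintype.card ι ^ Fintype.card U) := sum_le_sum fun i _ ↦ by linarith [hlow i, hup i]
    _ = _ := by simp only [sum_const, card_univ, nsmul_eq_mul]; ring

lemma exists_splitsEvenly_and_forall_splitsEvenly [Nonempty ι] (S₀ : Finset U)
    (ℱ : Finset (Finset U)) {δ₀ δ : ℝ} (hδ₀0 : 0 ≤ δ₀) (hδ₀1 : δ₀ < 1) (hδ0 : 0 ≤ δ) (hδ1 : δ < 1)
    (h : 2 * Fintype.card ι * exp (-(δ₀ ^ 2 * #S₀ / (3 * Fintype.card ι))) +
      ∑ F ∈ ℱ, 2 * Fintype.card ι * exp (-(δ ^ 2 * #F / (3 * Fintype.card ι))) < 1) :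
    ∃ ω : U → ι, SplitsEvenly δ₀ S₀ ω ∧ ∀ F ∈ ℱ, SplitsEvenly δ F ω := by
  let bad : Finset (U → ι) :=
    ({ω | ¬SplitsEvenly δ₀ S₀ ω} : Finset (U → ι)) ∪ ℱ.biUnion fun F ↦ {ω | ¬SplitsEvenly δ F ω}
  have hN : (0 : ℝ) < Fintype.card ι ^ Fintype.card U := by
    have : 0 < Fintype.card ι := Fintype.card_pos
    positivity
  have hbad : (#bad : ℝ) < #(univ : Finset (U → ι)) := by
    calc (#bad : ℝ) ≤ #({ω | ¬SplitsEvenly δ₀ S₀ ω} : Finset (U → ι)) +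
          ∑ F ∈ ℱ, (#({ω | ¬SplitsEvenly δ F ω} : Finset (U → ι)) : ℝ) := by
          exact_mod_cast (card_union_le _ _).trans (by gcongr; exact card_biUnion_le)
      _ ≤ 2 * Fintype.card ι * exp (-(δ₀ ^ 2 * #S₀ / (3 * Fintype.card ι))) *
              Fintype.card ι ^ Fintype.card U +
            ∑ F ∈ ℱ, 2 * Fintype.card ι * exp (-(δ ^ 2 * #F / (3 * Fintype.card ι))) *
              Fintype.card ι ^ Fintype.card U := by
          gcongr with F
          · exact card_not_splitsEvenly_le S₀ hδ₀0 hδ₀1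
          · exact card_not_splitsEvenly_le F hδ0 hδ1
      _ < 1 * (Fintype.card ι : ℝ) ^ Fintype.card U := by
          rw [← sum_mul, ← add_mul]
          gcongr
      _ = #(univ : Finset (U → ι)) := by simp
  obtain ⟨ω, -, hω⟩ := exists_mem_notMem_of_card_lt_card (by exact_mod_cast hbad)
  simp only [bad, mem_union, mem_biUnion, mem_filter, mem_univ, true_and, not_or, not_exists,
    not_and, not_not] at hω
  exact ⟨ω, hω⟩

end

theorem split_set_partition_general (U : Type*) [Fintype U] [DecidableEq U]
    (a b c f : ℕ) (ha : 1 ≤ a) (hc : 1 ≤ c) (hf : 1 ≤ f)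
    (hb : 12 * Real.log (4 * a) < (b : ℝ))
    (γ : ℝ) (hγl : Real.sqrt (3 * a * Real.log (4 * a * f) / c) < γ) (hγu : γ < 1)
    (hU : Fintype.card U = a * b)
    (ℱ : Finset (Finset U)) (hF : ℱ.card = f) (hFc : ∀ F ∈ ℱ, c ≤ F.card) :
    ∃ P : Fin a → Finset U,
      (∀ i j, i ≠ j → Disjoint (P i) (P j)) ∧
      (Finset.univ.biUnion P = Finset.univ) ∧
      (∀ i, (b : ℝ) / 2 ≤ ((P i).card : ℝ) ∧ ((P i).card : ℝ) ≤ 3 * (b : ℝ) / 2) ∧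
      (∀ F ∈ ℱ, ∀ i,
        (1 - γ) * (F.card : ℝ) / a ≤ ((F ∩ P i).card : ℝ) ∧
        ((F ∩ P i).card : ℝ) ≤ (1 + γ) * (F.card : ℝ) / a) := by
  have : Nonempty (Fin a) := ⟨⟨0, ha⟩⟩
  have ha0 : (0 : ℝ) < a := by exact_mod_cast ha
  have hγ0 : 0 < γ := (sqrt_nonneg _).trans_lt hγl
  have hsizes : 2 * (a : ℝ) * exp (-((1 / 2) ^ 2 * #(univ : Finset U) / (3 * a))) < 1 / (2 * 1) :=
    two_mul_mul_exp_neg_lt ha0 one_pos (by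
      rw [card_univ, hU, Nat.cast_mul, mul_one]
      field_simp
      linarith)
  have hsets : ∑ F ∈ ℱ, 2 * (a : ℝ) * exp (-(γ ^ 2 * #F / (3 * a))) ≤ 1 / 2 :=
    calc _ ≤ ∑ _F ∈ ℱ, 1 / (2 * (f : ℝ)) := sum_le_sum fun F hFm ↦ (two_mul_mul_exp_neg_lt ha0
          (by exact_mod_cast hf) (lt_sq_mul_div_of_sqrt_lt (by positivity) (by exact_mod_cast hc)
            (by exact_mod_cast hFc F hFm) hγl)).le
      _ = 1 / 2 := by
        rw [sum_const, hF, nsmul_eq_mul]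
        field_simp
  obtain ⟨ω, hω_univ, hω_ℱ⟩ := exists_splitsEvenly_and_forall_splitsEvenly (ι := Fin a)
    (δ₀ := 1 / 2) univ ℱ (by norm_num) (by norm_num) hγ0.le hγu
    (by simp only [Fintype.card_fin]; linarith)
  refine ⟨fun i ↦ {u | ω u = i}, fun i j hij ↦ ?_, by ext; simp, fun i ↦ ?_, fun F hFm i ↦ ?_⟩
  · exact disjoint_filter.2 fun u _ hi hj ↦ hij (hi.symm.trans hj)
  · have := hω_univ i
    rw [Fintype.card_fin, card_univ, hU, Nat.cast_mul,
      show (1 - 1 / 2 : ℝ) * (a * b) / a = b / 2 by field_simp; ring,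
      show (1 + 1 / 2 : ℝ) * (a * b) / a = 3 * b / 2 by field_simp; ring] at this
    simpa using this
  · rw [show F ∩ ({u | ω u = i} : Finset U) = {u ∈ F | ω u = i} by ext; simp]
    simpa using hω_ℱ F hFm i

/-- Lemma `lem:split-set`: let `a,b,c,f ≥ 1` be integers with
`b > 12 ln(4a)`, and `γ ∈ ((3a·ln(4af)/c)^{1/2}, 1)`. If `U` is a set of size `a·b` and
`ℱ` is a family of `f` subsets of `U`, each of size at least `c`, then `U` can be partitioned
into parts `U_1, …, U_a` with `b/2 ≤ |U_i| ≤ 3b/2` and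
`(1-γ)|F|/a ≤ |F ∩ U_i| ≤ (1+γ)|F|/a` for all `F ∈ ℱ` and all `i`. -/
theorem split_set_partition (U : Type*) [Fintype U] [DecidableEq U]
    (a b c f : ℕ) (ha : 1 ≤ a) (hb1 : 1 ≤ b) (hc : 1 ≤ c) (hf : 1 ≤ f)
    (hb : 12 * Real.log (4 * a) < (b : ℝ))
    (γ : ℝ) (hγl : Real.sqrt (3 * a * Real.log (4 * a * f) / c) < γ) (hγu : γ < 1)
    (hU : Fintype.card U = a * b)
    (ℱ : Finset (Finset U)) (hF : ℱ.card = f) (hFc : ∀ F ∈ ℱ, c ≤ F.card) :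
    ∃ P : Fin a → Finset U,
      (∀ i j, i ≠ j → Disjoint (P i) (P j)) ∧
      (Finset.univ.biUnion P = Finset.univ) ∧
      (∀ i, (b : ℝ) / 2 ≤ ((P i).card : ℝ) ∧ ((P i).card : ℝ) ≤ 3 * (b : ℝ) / 2) ∧
      (∀ F ∈ ℱ, ∀ i,
        (1 - γ) * (F.card : ℝ) / a ≤ ((F ∩ P i).card : ℝ) ∧
        ((F ∩ P i).card : ℝ) ≤ (1 + γ) * (F.card : ℝ) / a) :=
  split_set_partition_general U a b c f ha hc hf hb γ hγl hγu hU ℱ hF hFc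
end
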